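/- arXiv:math/0010002 — 2 statements merged into one kernel-verified Lean document; each statement's English description precedes it below -/
import Mathlib

section
/- Let k be a field of characteristic zero, let α, β ∈ k be nonzero, let λ₁, λ₂ ∈ ℚ, let r ≥ 0 be an integer, and let h ∈ k[Y, Z] be a nonzero polynomial of total degree at most r. Let B₁(y) = Σ_{i≥0} C(λ₁, i)·α^{−i}·y^i and B₂(z) = Σ_{i≥0} C(λ₂, i)·β^{−i}·z^i, where C(λ, i) = λ(λ−1)⋯(λ−i+1)/i! ∈ ℚ (the formal binomial expansions of (1 + y/α)^{λ₁} and (1 + z/β)^{λ₂}). If the product B₁(y)·B₂(z)·h(y + α, z + β) ∈ k[[y,z]] is congruent to a constant modulo the ideal (y, z)^{r+2}, then −λ₁ and −λ₂ are integers with 0 ≤ −λ₁ ≤ r and 0 ≤ −λ₂ ≤ r, one has −λ₁ − λ₂ ≤ r, and h(Y, Z) = e·Y^{−λ₁}·Z^{−λ₂} for some nonzero e ∈ k. -/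
/-!
Put `g(Y, Z) = h(Y + α, Z + β)`, a polynomial of degree `≤ r`. Multiplying the congruence
`B₁ B₂ g ≡ c mod (Y, Z)^{r+2}` by the inverse series `(1 + Y/α)^{-λ₁} (1 + Z/β)^{-λ₂}` gives
`g ≡ c (1 + Y/α)^{-λ₁} (1 + Z/β)^{-λ₂}`, and `c ≠ 0` since `g ≠ 0`.
As `g` has no terms of degree `r + 1`, `C(-λ₁, a) C(-λ₂, b) = 0` whenever `a + b = r + 1`:
the cases `(r + 1, 0)` and `(0, r + 1)` make `-λ₁ = n₁` and `-λ₂ = n₂` natural numbers, and the case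
`(n₁, r + 1 - n₁)` forces `n₁ + n₂ ≤ r`. Then `c (1 + Y/α)^{n₁} (1 + Z/β)^{n₂}` is a polynomial of
degree `≤ r` congruent to `g`, hence equal to it; substituting back,
`h = c α^{-n₁} β^{-n₂} Y^{n₁} Z^{n₂}`.
-/

noncomputable section

/-- The generalized binomial coefficient `C(λ, i) = λ(λ−1)⋯(λ−i+1)/i!` in `ℚ`. -/
def qBinom (l : ℚ) (i : ℕ) : ℚ := (∏ j ∈ Finset.range i, (l - (j : ℚ))) / (Nat.factorial i)

theorem descPochhammer_smeval_eq_prod_range {R : Type*} [CommRing R] (r : R) (n : ℕ) :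
    (descPochhammer ℤ n).smeval r = ∏ j ∈ Finset.range n, (r - j) := by
  induction n with
  | zero => simp [Polynomial.smeval_one]
  | succ n ih =>
    rw [descPochhammer_succ_right, Polynomial.smeval_mul, ih, Finset.prod_range_succ,
      Polynomial.smeval_sub, Polynomial.smeval_X, Polynomial.smeval_natCast]
    simp

theorem qBinom_eq_choose (l : ℚ) (n : ℕ) : qBinom l n = Ring.choose l n := by
  rw [Ring.choose_eq_smul, descPochhammer_smeval_eq_prod_range, qBinom, smul_eq_mul,
    div_eq_inv_mul]

theorem qBinom_zero_right (l : ℚ) : qBinom l 0 = 1 := by simp [qBinom]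

theorem qBinom_eq_zero_iff {l : ℚ} {n : ℕ} : qBinom l n = 0 ↔ ∃ j < n, l = j := by
  simp [qBinom, Finset.prod_eq_zero_iff, sub_eq_zero, Nat.factorial_ne_zero]

theorem exists_natCast_of_qBinom_mul_eq_zero {m₁ m₂ : ℚ} {r : ℕ}
    (h : ∀ a b, a + b = r + 1 → qBinom m₁ a * qBinom m₂ b = 0) :
    ∃ n₁ n₂ : ℕ, m₁ = n₁ ∧ m₂ = n₂ ∧ n₁ + n₂ ≤ r := by
  obtain ⟨n₁, hn₁, rfl⟩ := qBinom_eq_zero_iff.mp <| by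
    simpa [qBinom_zero_right] using h (r + 1) 0 rfl
  obtain ⟨n₂, -, rfl⟩ := qBinom_eq_zero_iff.mp <| by
    simpa [qBinom_zero_right] using h 0 (r + 1) (zero_add _)
  refine ⟨n₁, n₂, rfl, rfl, not_lt.mp fun hr => ?_⟩
  have hself : ∀ {n m : ℕ}, m ≤ n → qBinom n m ≠ 0 := fun hmn h0 => by
    obtain ⟨j, hj, hnj⟩ := qBinom_eq_zero_iff.mp h0
    have : _ = j := Nat.cast_injective hnj
    omega
  rcases mul_eq_zero.mp (h n₁ (r + 1 - n₁) (by omega)) with h0 | h0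
  · exact hself le_rfl h0
  · exact hself (by omega) h0

namespace MvPolynomial

variable {σ τ R : Type*} [CommRing R]

@[simp, norm_cast]
theorem coe_sub (p q : MvPolynomial σ R) :
    ((p - q : MvPolynomial σ R) : MvPowerSeries σ R) = p - q :=
  map_sub coeToMvPowerSeries.ringHom p q

theorem coe_aeval (f : σ → MvPolynomial τ R) (p : MvPolynomial σ R) :
    ((aeval f p : MvPolynomial τ R) : MvPowerSeries τ R) =
      aeval (fun i => (f i : MvPowerSeries τ R)) p := by
  induction p using MvPolynomial.induction_on with
  | C a => simp [MvPowerSeries.algebraMap_apply]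
  | add p q hp hq => rw [map_add, map_add, coe_add, hp, hq]
  | mul_X p i hp => rw [map_mul, map_mul, coe_mul, hp, aeval_X, aeval_X]

theorem eq_zero_of_totalDegree_lt_order {p : MvPolynomial σ R}
    (hp : (p.totalDegree : ℕ∞) < (p : MvPowerSeries σ R).order) : p = 0 := by
  ext d
  by_contra hd
  have hle : (d.degree : ℕ∞) ≤ p.totalDegree := by
    exact_mod_cast le_totalDegree (mem_support_iff.mpr hd)
  exact (MvPowerSeries.order_le (by rwa [coeff_coe])).not_gt (hle.trans_lt hp)

theorem totalDegree_aeval_le {f : σ → MvPolynomial τ R} (hf : ∀ i, (f i).totalDegree ≤ 1)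
    (p : MvPolynomial σ R) : (aeval f p).totalDegree ≤ p.totalDegree := by
  conv_lhs => rw [p.as_sum]
  rw [map_sum]
  refine totalDegree_finsetSum_le fun d hd => ?_
  rw [aeval_monomial, algebraMap_eq]
  refine (totalDegree_mul _ _).trans ?_
  rw [totalDegree_C, zero_add]
  refine (totalDegree_finsetProd _ _).trans <|
    (Finset.sum_le_sum fun i _ => ?_).trans (le_totalDegree hd)
  exact (totalDegree_pow _ _).trans (mul_le_of_le_one_right (Nat.zero_le _) (hf i))

theorem totalDegree_X_add_C_le (a : R) (i : σ) :
    (X i + C a : MvPolynomial σ R).totalDegree ≤ 1 := by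
  refine (totalDegree_add _ _).trans (max_le ?_ (by simp))
  exact (totalDegree_monomial_le _ _).trans (by simp)

theorem totalDegree_one_add_C_mul_X_pow_le (w : R) (i : σ) (n : ℕ) :
    ((1 + C w * X i) ^ n : MvPolynomial σ R).totalDegree ≤ n := by
  refine (totalDegree_pow _ _).trans (mul_le_of_le_one_right (Nat.zero_le n) ?_)
  refine (totalDegree_add _ _).trans (max_le (by simp) ((totalDegree_mul _ _).trans ?_))
  rw [totalDegree_C, zero_add, X]
  exact (totalDegree_monomial_le _ _).trans (by simp)

theorem aeval_X_sub_C_aeval_X_add_C (a : σ → R) (p : MvPolynomial σ R) :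
    aeval (fun i => X i - C (a i)) (aeval (fun i => X i + C (a i)) p) = p := by
  rw [comp_aeval_apply]
  simp

end MvPolynomial

namespace MvPowerSeries

variable {σ R : Type*} [CommRing R]

theorem le_order_sub_C_constantCoeff {f : MvPowerSeries σ R} {n : ℕ∞}
    (hf : ∀ d, d ≠ 0 → (d.degree : ℕ∞) < n → coeff d f = 0) :
    n ≤ (f - C (constantCoeff f)).order := by
  classical
  refine le_order fun d hd => ?_
  rw [map_sub, coeff_C]
  split_ifs with h0
  · rw [h0, coeff_zero_eq_constantCoeff_apply, sub_self]
  · rw [hf d h0 hd, sub_zero]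

theorem le_order_sub_C_constantCoeff_of_fin_two {f : MvPowerSeries (Fin 2) R} {r : ℕ}
    (hf : ∀ d : Fin 2 →₀ ℕ, 1 ≤ d 0 + d 1 → d 0 + d 1 ≤ r + 1 → coeff d f = 0) :
    ((r + 2 : ℕ) : ℕ∞) ≤ (f - C (constantCoeff f)).order := by
  refine le_order_sub_C_constantCoeff fun d hd0 hd => hf d ?_ ?_
  all_goals have hdeg : d.degree = d 0 + d 1 := by rw [Finsupp.degree_eq_sum, Fin.sum_univ_two]
  · exact Nat.one_le_iff_ne_zero.mpr (hdeg ▸ (Finsupp.degree_eq_zero_iff d).not.mpr hd0)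
  · have : d 0 + d 1 < r + 2 := by exact_mod_cast hdeg ▸ hd
    omega

theorem order_mul_sub_C_le_order_sub_C_mul {u v : MvPowerSeries σ R} (huv : u * v = 1)
    (f : MvPowerSeries σ R) (c : R) : (v * f - C c).order ≤ (f - C c * u).order := by
  have : f - C c * u = u * (v * f - C c) := by linear_combination (-f) * huv
  rw [this]
  exact le_add_self.trans le_order_mul

theorem coeff_subst_X_zero (f : PowerSeries R) (d : Fin 2 →₀ ℕ) :
    coeff d (f.subst (X 0 : MvPowerSeries (Fin 2) R)) =
      if d 1 = 0 then PowerSeries.coeff (d 0) f else 0 := by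
  rw [PowerSeries.coeff_subst_single]
  exact if_congr (by simp [Finsupp.ext_iff, Fin.forall_fin_two]) rfl rfl

theorem coeff_subst_X_one (f : PowerSeries R) (d : Fin 2 →₀ ℕ) :
    coeff d (f.subst (X 1 : MvPowerSeries (Fin 2) R)) =
      if d 0 = 0 then PowerSeries.coeff (d 1) f else 0 := by
  rw [PowerSeries.coeff_subst_single]
  exact if_congr (by simp [Finsupp.ext_iff, Fin.forall_fin_two, eq_comm]) rfl rfl

theorem coeff_subst_X_zero_mul_subst_X_one (f g : PowerSeries R) (d : Fin 2 →₀ ℕ) :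
    coeff d (f.subst (X 0 : MvPowerSeries (Fin 2) R) * g.subst (X 1)) =
      PowerSeries.coeff (d 0) f * PowerSeries.coeff (d 1) g := by
  have hd : Finsupp.single 0 (d 0) + Finsupp.single 1 (d 1) = d := by
    ext i; fin_cases i <;> simp
  rw [coeff_mul, Finset.sum_eq_single_of_mem (Finsupp.single 0 (d 0), Finsupp.single 1 (d 1))
    (Finset.HasAntidiagonal.mem_antidiagonal.mpr hd)]
  · simp [coeff_subst_X_zero, coeff_subst_X_one]
  · rintro ⟨e₁, e₂⟩ he hne
    obtain rfl := Finset.HasAntidiagonal.mem_antidiagonal.mp he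
    rw [coeff_subst_X_zero, coeff_subst_X_one]
    split_ifs with h₁ h₂
    · simp [Prod.ext_iff, Finsupp.ext_iff, Fin.forall_fin_two, h₁, h₂] at hne
    all_goals simp

end MvPowerSeries

section BivariateBinomialSeries

open PowerSeries (rescale binomialSeries)

variable {k : Type*} [Field k] [CharZero k]

theorem coeff_rescale_binomialSeries (l : ℚ) (u : k) (n : ℕ) :
    PowerSeries.coeff n (rescale u (binomialSeries k l)) = (qBinom l n : k) * u ^ n := by
  rw [PowerSeries.coeff_rescale, PowerSeries.binomialSeries_coeff, Rat.smul_one_eq_cast,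
    qBinom_eq_choose, mul_comm]

/-- The expansion of `(1 + u Y) ^ l₁ (1 + v Z) ^ l₂` in `k⟦Y, Z⟧`. -/
def bivariateBinomialSeries (l₁ l₂ : ℚ) (u v : k) : MvPowerSeries (Fin 2) k :=
  (rescale u (binomialSeries k l₁)).subst (MvPowerSeries.X 0) *
    (rescale v (binomialSeries k l₂)).subst (MvPowerSeries.X 1)

theorem coeff_bivariateBinomialSeries (l₁ l₂ : ℚ) (u v : k) (d : Fin 2 →₀ ℕ) :
    MvPowerSeries.coeff d (bivariateBinomialSeries l₁ l₂ u v) =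
      (qBinom l₁ (d 0) : k) * u ^ d 0 * ((qBinom l₂ (d 1) : k) * v ^ d 1) := by
  rw [bivariateBinomialSeries, MvPowerSeries.coeff_subst_X_zero_mul_subst_X_one,
    coeff_rescale_binomialSeries, coeff_rescale_binomialSeries]

theorem mul_eq_bivariateBinomialSeries {l₁ l₂ : ℚ} {u v : k} {B₁ B₂ : MvPowerSeries (Fin 2) k}
    (hB₁ : B₁ = fun d => if d 1 = 0 then (qBinom l₁ (d 0) : k) * u ^ d 0 else 0)
    (hB₂ : B₂ = fun d => if d 0 = 0 then (qBinom l₂ (d 1) : k) * v ^ d 1 else 0) :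
    B₁ * B₂ = bivariateBinomialSeries l₁ l₂ u v := by
  rw [bivariateBinomialSeries]
  congr 1 <;> ext d
  · rw [MvPowerSeries.coeff_subst_X_zero, coeff_rescale_binomialSeries, hB₁]
    rfl
  · rw [MvPowerSeries.coeff_subst_X_one, coeff_rescale_binomialSeries, hB₂]
    rfl

theorem bivariateBinomialSeries_add (l₁ l₂ m₁ m₂ : ℚ) (u v : k) :
    bivariateBinomialSeries (l₁ + m₁) (l₂ + m₂) u v =
      bivariateBinomialSeries l₁ l₂ u v * bivariateBinomialSeries m₁ m₂ u v := by
  simp only [bivariateBinomialSeries, PowerSeries.binomialSeries_add, map_mul,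
    PowerSeries.subst_mul (PowerSeries.HasSubst.X _)]
  ring

theorem bivariateBinomialSeries_zero (u v : k) : bivariateBinomialSeries 0 0 u v = 1 := by
  simp [bivariateBinomialSeries, ← PowerSeries.coe_substAlgHom (PowerSeries.HasSubst.X _)]

theorem bivariateBinomialSeries_neg_mul_self (l₁ l₂ : ℚ) (u v : k) :
    bivariateBinomialSeries (-l₁) (-l₂) u v * bivariateBinomialSeries l₁ l₂ u v = 1 := by
  rw [← bivariateBinomialSeries_add, neg_add_cancel, neg_add_cancel, bivariateBinomialSeries_zero]

open MvPolynomial in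
theorem bivariateBinomialSeries_natCast (n₁ n₂ : ℕ) (u v : k) :
    bivariateBinomialSeries n₁ n₂ u v =
      (((1 + C u * X 0) ^ n₁ * (1 + C v * X 1) ^ n₂ : MvPolynomial (Fin 2) k) :
        MvPowerSeries (Fin 2) k) := by
  simp [bivariateBinomialSeries, ← PowerSeries.coe_substAlgHom (PowerSeries.HasSubst.X _),
    PowerSeries.rescale_X, PowerSeries.substAlgHom_X]
  simp only [PowerSeries.coe_substAlgHom, PowerSeries.subst_C]

theorem qBinom_mul_eq_zero_of_lt_order {g : MvPolynomial (Fin 2) k} {l₁ l₂ : ℚ} {u v c : k}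
    (hu : u ≠ 0) (hv : v ≠ 0) (hc : c ≠ 0) {a b : ℕ} (hg : g.totalDegree < a + b)
    (hord : ((a + b : ℕ) : ℕ∞) < ((g : MvPowerSeries (Fin 2) k) -
      MvPowerSeries.C c * bivariateBinomialSeries l₁ l₂ u v).order) :
    qBinom l₁ a * qBinom l₂ b = 0 := by
  set d : Fin 2 →₀ ℕ := Finsupp.single 0 a + Finsupp.single 1 b
  have hd : d.degree = a + b := by simp [d]
  have hcoeff := MvPowerSeries.coeff_of_lt_order (hd ▸ hord)
  rw [map_sub, MvPolynomial.coeff_coe,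
    MvPolynomial.coeff_eq_zero_of_totalDegree_lt (show g.totalDegree < d.degree from hd ▸ hg),
    MvPowerSeries.coeff_C_mul, coeff_bivariateBinomialSeries] at hcoeff
  simpa [d, hu, hv, hc] using hcoeff

open MvPolynomial in
theorem eq_C_mul_of_le_order_bivariateBinomialSeries_mul_sub_C {g : MvPolynomial (Fin 2) k}
    (hg : g ≠ 0) {r : ℕ} (hdeg : g.totalDegree ≤ r) {l₁ l₂ : ℚ} {u v c : k} (hu : u ≠ 0)
    (hv : v ≠ 0) (hord : ((r + 2 : ℕ) : ℕ∞) ≤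
      (bivariateBinomialSeries l₁ l₂ u v * (g : MvPowerSeries (Fin 2) k) - MvPowerSeries.C c).order) :
    ∃ n₁ n₂ : ℕ, l₁ = -(n₁ : ℚ) ∧ l₂ = -(n₂ : ℚ) ∧ n₁ + n₂ ≤ r ∧ c ≠ 0 ∧
      g = C c * (1 + C u * X 0) ^ n₁ * (1 + C v * X 1) ^ n₂ := by
  -- `g ≡ c (1 + uY) ^ (-l₁) (1 + vZ) ^ (-l₂)` modulo terms of degree `≥ r + 2`
  have hord' := hord.trans (MvPowerSeries.order_mul_sub_C_le_order_sub_C_mul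
    (bivariateBinomialSeries_neg_mul_self l₁ l₂ u v) _ c)
  have hc : c ≠ 0 := by
    rintro rfl
    simp only [map_zero, zero_mul, sub_zero] at hord'
    refine hg (eq_zero_of_totalDegree_lt_order (lt_of_lt_of_le ?_ hord'))
    exact_mod_cast (by omega : g.totalDegree < r + 2)
  obtain ⟨n₁, n₂, h₁, h₂, hn⟩ := exists_natCast_of_qBinom_mul_eq_zero (r := r) fun a b hab =>
    qBinom_mul_eq_zero_of_lt_order hu hv hc (by omega) (lt_of_lt_of_le (by simp [hab]) hord')
  refine ⟨n₁, n₂, by linarith, by linarith, hn, hc, ?_⟩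
  rw [h₁, h₂, bivariateBinomialSeries_natCast, ← coe_C, ← coe_mul, ← coe_sub] at hord'
  rw [mul_assoc, ← sub_eq_zero]
  refine eq_zero_of_totalDegree_lt_order (lt_of_lt_of_le ?_ hord')
  have hq : (C c * ((1 + C u * X 0) ^ n₁ * (1 + C v * X 1) ^ n₂) :
      MvPolynomial (Fin 2) k).totalDegree ≤ r :=
    (totalDegree_mul _ _).trans <| by
      rw [totalDegree_C, zero_add]
      exact ((totalDegree_mul _ _).trans (add_le_add (totalDegree_one_add_C_mul_X_pow_le u 0 n₁)
        (totalDegree_one_add_C_mul_X_pow_le v 1 n₂))).trans hn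
  have := (totalDegree_sub _ _).trans (max_le hdeg hq)
  exact_mod_cast (by omega : (g - _).totalDegree < r + 2)

end BivariateBinomialSeries

open MvPolynomial in
/-- if the product of the formal binomial series `(1 + y/α)^{λ₁}`,
`(1 + z/β)^{λ₂}` and `h(y + α, z + β)` is congruent to a constant modulo `(y,z)^{r+2}`,
where `h` is a nonzero polynomial of total degree at most `r`, then `−λ₁, −λ₂ ∈ {0,…,r}`,
`−λ₁ − λ₂ ≤ r`, and `h(Y,Z) = e Y^{−λ₁} Z^{−λ₂}` for some `e ≠ 0`. -/
theorem binomial_series_times_polynomial_constant_two_vars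
    (k : Type*) [Field k] [CharZero k]
    (α β : k) (hα : α ≠ 0) (hβ : β ≠ 0) (l₁ l₂ : ℚ) (r : ℕ)
    (h : MvPolynomial (Fin 2) k) (hh : h ≠ 0) (hdeg : h.totalDegree ≤ r)
    (B₁ B₂ : MvPowerSeries (Fin 2) k)
    (hB₁ : B₁ = fun d : Fin 2 →₀ ℕ =>
      if d 1 = 0 then ((qBinom l₁ (d 0) : ℚ) : k) * α⁻¹ ^ (d 0) else 0)
    (hB₂ : B₂ = fun d : Fin 2 →₀ ℕ =>
      if d 0 = 0 then ((qBinom l₂ (d 1) : ℚ) : k) * β⁻¹ ^ (d 1) else 0)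
    (hconst : ∀ d : Fin 2 →₀ ℕ, 1 ≤ d 0 + d 1 → d 0 + d 1 ≤ r + 1 →
      MvPowerSeries.coeff d
        (B₁ * B₂ * MvPolynomial.aeval
          (fun i : Fin 2 => MvPowerSeries.X i +
            MvPowerSeries.C (if i = 0 then α else β)) h) = 0) :
    ∃ n₁ n₂ : ℕ, l₁ = -(n₁ : ℚ) ∧ l₂ = -(n₂ : ℚ) ∧ n₁ ≤ r ∧ n₂ ≤ r ∧ n₁ + n₂ ≤ r ∧
      ∃ e : k, e ≠ 0 ∧
        h = MvPolynomial.C e * MvPolynomial.X 0 ^ n₁ * MvPolynomial.X 1 ^ n₂ := by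
  set a : Fin 2 → k := fun i => if i = 0 then α else β
  set g := aeval (fun i => X i + C (a i)) h
  have hg : aeval (fun i => MvPowerSeries.X i + MvPowerSeries.C (a i)) h =
      (g : MvPowerSeries (Fin 2) k) := by
    simp only [g, coe_aeval, coe_add, coe_X, coe_C]
  have hord := MvPowerSeries.le_order_sub_C_constantCoeff_of_fin_two (hg ▸ hconst)
  rw [mul_eq_bivariateBinomialSeries hB₁ hB₂] at hord
  set c := MvPowerSeries.constantCoeff
    (bivariateBinomialSeries l₁ l₂ α⁻¹ β⁻¹ * (g : MvPowerSeries (Fin 2) k))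
  obtain ⟨n₁, n₂, h₁, h₂, hn, hc, hgq⟩ := eq_C_mul_of_le_order_bivariateBinomialSeries_mul_sub_C
    (fun h0 => hh (by rw [← aeval_X_sub_C_aeval_X_add_C a h, h0, map_zero]))
    ((totalDegree_aeval_le (fun i => totalDegree_X_add_C_le _ _) h).trans hdeg)
    (inv_ne_zero hα) (inv_ne_zero hβ) hord
  refine ⟨n₁, n₂, h₁, h₂, by omega, by omega, hn, c * α⁻¹ ^ n₁ * β⁻¹ ^ n₂,
    by simp [hc, hα, hβ], ?_⟩
  have hX : ∀ (i : Fin 2) (w : k), w ≠ 0 → 1 + C w⁻¹ * (X i - C w) = C w⁻¹ * X i :=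
    fun i w hw => by rw [mul_sub, ← C_mul, inv_mul_cancel₀ hw, C_1]; ring
  calc h = aeval (fun i => X i - C (a i)) g := (aeval_X_sub_C_aeval_X_add_C a h).symm
    _ = C c * (C α⁻¹ * X 0) ^ n₁ * (C β⁻¹ * X 1) ^ n₂ := by
      rw [show g = _ from hgq]
      simp only [map_mul, map_pow, map_add, map_one, aeval_X, aeval_C, algebraMap_eq, a,
        ↓reduceIte, one_ne_zero, hX _ _ hα, hX _ _ hβ]
    _ = C (c * α⁻¹ ^ n₁ * β⁻¹ ^ n₂) * X 0 ^ n₁ * X 1 ^ n₂ := by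
      simp only [mul_pow, C_mul, C_pow]
      ring

end
end

section
/- Let k be a field of characteristic zero, let r ≥ 1 be an integer, let a, b ≥ 1 with gcd(a, b) = 1, and let c, d ≥ 0. Let F ∈ k[z][[x,y]] be a formal power series in x and y whose coefficients are polynomials in z over k, and suppose that the coefficient of x^i y^j z^0 in F is zero whenever b(c + i) = a(d + j). Suppose that there are infinitely many α ∈ k such that, denoting by F_α the series obtained from F by substituting z + α for z, the coefficient of x^i y^j z^k in F_α is zero whenever i + j + k < r and in addition either k > 0 or b(c + i) ≠ a(d + j). Then the coefficient of x^i y^j z^k in F is zero for every (i, j, k) with i + j ≤ r − 1, except possibly for those with i + j = r − 1, b(c + i) = a(d + j) and k ≥ 1; equivalently, F = τ(z)·x^{i₀} y^{j₀} + Σ_{i+j≥r} a_{ij}(z)·x^i y^j, where (i₀, j₀), if it exists, is the unique pair of nonnegative integers with i₀ + j₀ = r − 1 and a(d + j₀) − b(c + i₀) = 0, and τ(z) has zero constant term. -/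
/-!
Fix `x^i y^j` with `i + j < r` and let `P ∈ k[z]` be its coefficient in `F`. Its coefficient in
`F_α` is the Taylor shift `P(z + α)`, with `z^0`- and `z^1`-coefficients `P(α)` and `P'(α)`.
If `b(c+i) ≠ a(d+j)`, then `P(α) = 0` for infinitely many `α`, so `P = 0`. If `b(c+i) = a(d+j)`,
the constant term of `P` vanishes by normalization; when moreover `i + j + 1 < r`, `P'(α) = 0` for
infinitely many `α`, so `P' = 0` and, in characteristic zero, `P` is constant, hence zero.
-/

open Polynomial

namespace Polynomial

variable {R : Type*} [CommRing R]

theorem aeval_X_add_C_eq_taylor (α : R) (P : R[X]) : aeval (X + C α) P = taylor α P := by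
  rw [taylor_apply, comp_eq_aeval]

variable [IsDomain R]

theorem eq_zero_of_infinite_setOf_taylor_coeff_zero {P : R[X]}
    (h : {α : R | (taylor α P).coeff 0 = 0}.Infinite) : P = 0 :=
  eq_zero_of_infinite_isRoot P <| by simpa only [IsRoot.def, taylor_coeff_zero] using h

theorem natDegree_eq_zero_of_infinite_setOf_taylor_coeff_one [CharZero R] {P : R[X]}
    (h : {α : R | (taylor α P).coeff 1 = 0}.Infinite) : P.natDegree = 0 :=
  derivative_eq_zero.mp <| eq_zero_of_infinite_isRoot _ <| by
    simpa only [IsRoot.def, taylor_coeff_one] using h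

end Polynomial

theorem MvPowerSeries.coeff_map_aeval_X_add_C {σ k : Type*} [CommRing k] (α : k)
    (n : σ →₀ ℕ) (F : MvPowerSeries σ k[X]) :
    coeff n (map (Polynomial.aeval (R := k) (Polynomial.X + Polynomial.C α)).toRingHom F) =
      taylor α (coeff n F) := by
  rw [coeff_map, AlgHom.toRingHom_eq_coe, RingHom.coe_coe, aeval_X_add_C_eq_taylor]

theorem two_point_form_along_two_curve_general
    (k : Type*) [Field k] [CharZero k]
    (r : ℕ)
    (a b c d : ℕ)
    (F : MvPowerSeries (Fin 2) (Polynomial k))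
    (h0 : ∀ i j : ℕ, b * (c + i) = a * (d + j) →
      (MvPowerSeries.coeff (R := Polynomial k)
        (Finsupp.single 0 i + Finsupp.single 1 j) F).coeff 0 = 0)
    (hinf : {α : k | ∀ i j kk : ℕ, i + j + kk < r →
      (0 < kk ∨ b * (c + i) ≠ a * (d + j)) →
      (MvPowerSeries.coeff (R := Polynomial k) (Finsupp.single 0 i + Finsupp.single 1 j)
        (MvPowerSeries.map (σ := Fin 2)
          ((Polynomial.aeval (R := k) (Polynomial.X + Polynomial.C α)).toRingHom)
          F)).coeff kk = 0}.Infinite) :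
    ∀ i j kk : ℕ, i + j < r →
      ¬ (i + j + 1 = r ∧ b * (c + i) = a * (d + j) ∧ 1 ≤ kk) →
      (MvPowerSeries.coeff (R := Polynomial k)
        (Finsupp.single 0 i + Finsupp.single 1 j) F).coeff kk = 0 := by
  intro i j kk hij hexcept
  simp only [MvPowerSeries.coeff_map_aeval_X_add_C] at hinf
  set P := MvPowerSeries.coeff (Finsupp.single 0 i + Finsupp.single 1 j) F
  by_cases heq : b * (c + i) = a * (d + j)
  · rcases Nat.eq_zero_or_pos kk with rfl | hkk
    · exact h0 i j heq
    have hP : P.natDegree = 0 := natDegree_eq_zero_of_infinite_setOf_taylor_coeff_one <|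
      hinf.mono fun α hα ↦ by exact hα i j 1 (by omega) (Or.inl one_pos)
    exact coeff_eq_zero_of_natDegree_lt (by omega)
  · have hP : P = 0 := eq_zero_of_infinite_setOf_taylor_coeff_zero <|
      hinf.mono fun α hα ↦ by exact hα i j 0 (by omega) (Or.inr heq)
    rw [hP, coeff_zero]

/-- let `F ∈ k[z][[x,y]]` (a power series in `x, y` with coefficients which
are polynomials in `z`), normalized so that the `z`-constant part of the coefficient of
`x^i y^j` vanishes whenever `b(c+i) = a(d+j)`.  If for infinitely many `α ∈ k` the series
obtained by substituting `z + α` for `z` has vanishing `x^i y^j z^k`-coefficient whenever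
`i + j + k < r` and moreover `k > 0` or `b(c+i) ≠ a(d+j)`, then the coefficient of
`x^i y^j z^k` in `F` vanishes for all `(i,j,k)` with `i + j ≤ r − 1` except possibly
those with `i + j = r − 1`, `b(c+i) = a(d+j)` and `k ≥ 1`.  (Here the power series
variables are indexed by `0 ↦ x` and `1 ↦ y`.) -/
theorem two_point_form_along_two_curve
    (k : Type*) [Field k] [CharZero k]
    (r : ℕ) (hr : 1 ≤ r)
    (a b c d : ℕ) (ha : 1 ≤ a) (hb : 1 ≤ b) (hab : Nat.gcd a b = 1)
    (F : MvPowerSeries (Fin 2) (Polynomial k))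
    (h0 : ∀ i j : ℕ, b * (c + i) = a * (d + j) →
      (MvPowerSeries.coeff (R := Polynomial k)
        (Finsupp.single 0 i + Finsupp.single 1 j) F).coeff 0 = 0)
    (hinf : {α : k | ∀ i j kk : ℕ, i + j + kk < r →
      (0 < kk ∨ b * (c + i) ≠ a * (d + j)) →
      (MvPowerSeries.coeff (R := Polynomial k) (Finsupp.single 0 i + Finsupp.single 1 j)
        (MvPowerSeries.map (σ := Fin 2)
          ((Polynomial.aeval (R := k) (Polynomial.X + Polynomial.C α)).toRingHom)
          F)).coeff kk = 0}.Infinite) :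
    ∀ i j kk : ℕ, i + j < r →
      ¬ (i + j + 1 = r ∧ b * (c + i) = a * (d + j) ∧ 1 ≤ kk) →
      (MvPowerSeries.coeff (R := Polynomial k)
        (Finsupp.single 0 i + Finsupp.single 1 j) F).coeff kk = 0 :=
  two_point_form_along_two_curve_general k r a b c d F h0 hinf
end
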